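/- Suppose ρ ∈ ℂ^{2n+2} satisfies ρᵀAₙ = λρᵀ and ρᵀB = 0, and suppose λ² + α₂λ + α₁ ≠ 0 and α₃λ + α₁ ≠ 0. Then ρ = 0. -/

import Mathlib

/-!
Extend `ρ` by zero to a sequence on `ℕ`, so that the boundary conditions become automatic.
Eliminating the even entries from the eigen-equations of the odd columns gives
`(λ² + α₂λ + α₁) ρ_{2m+3} = (α₃λ + α₁) ρ_{2m+5}`; as the sequence vanishes past the last index and
`λ² + α₂λ + α₁ ≠ 0`, downward induction kills the odd entries from index 3 on. The odd columns
then say that the even entries from index 2 on are constant, hence zero; `ρᵀB = 0` is `ρ₁ = 0`,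
and column 1 gives `ρ₀ = 0`.
-/

def platoonA (α₁ α₂ α₃ : ℝ) (n : ℕ) : Matrix (Fin (2 * n + 2)) (Fin (2 * n + 2)) ℝ :=
  Matrix.of fun i j =>
    if i.val = 0 ∧ j.val = 1 then 1
    else if 2 ≤ i.val ∧ i.val % 2 = 0 ∧ j.val = i.val + 1 then -1
    else if 2 ≤ i.val ∧ i.val % 2 = 0 ∧ j.val + 1 = i.val then 1
    else if 3 ≤ i.val ∧ i.val % 2 = 1 ∧ j.val + 1 = i.val then α₁
    else if 3 ≤ i.val ∧ i.val % 2 = 1 ∧ j.val = i.val then -α₂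
    else if 3 ≤ i.val ∧ i.val % 2 = 1 ∧ j.val + 2 = i.val then α₃
    else 0

noncomputable def platoonAC (α₁ α₂ α₃ : ℝ) (n : ℕ) :
    Matrix (Fin (2 * n + 2)) (Fin (2 * n + 2)) ℂ :=
  (platoonA α₁ α₂ α₃ n).map (fun x => (x : ℂ))

def platoonBC (n : ℕ) : Fin (2 * n + 2) → ℂ := fun i => if i.val = 1 then 1 else 0

section ZeroExtend

variable {R : Type*} {N : ℕ}

def zeroExtend [Zero R] (v : Fin N → R) (k : ℕ) : R :=
  if h : k < N then v ⟨k, h⟩ else 0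

@[simp]
lemma zeroExtend_val [Zero R] (v : Fin N → R) (i : Fin N) : zeroExtend v i = v i := by
  simp [zeroExtend]

lemma zeroExtend_of_le [Zero R] (v : Fin N → R) {k : ℕ} (hk : N ≤ k) : zeroExtend v k = 0 := by
  simp [zeroExtend, Nat.not_lt.mpr hk]

lemma zeroExtend_smul [MulZeroClass R] (c : R) (v : Fin N → R) (k : ℕ) :
    zeroExtend (c • v) k = c * zeroExtend v k := by
  unfold zeroExtend
  split_ifs <;> simp

lemma sum_mul_ite_val_eq [NonUnitalNonAssocSemiring R] (v : Fin N → R) (k : ℕ) (c : R) :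
    ∑ i, v i * (if (i : ℕ) = k then c else 0) = zeroExtend v k * c := by
  by_cases hk : k < N
  · rw [Fintype.sum_eq_single ⟨k, hk⟩ fun i hi => by simp [Fin.ext_iff.not.mp hi]]
    simp [zeroExtend, hk]
  · rw [zeroExtend_of_le v (Nat.not_lt.mp hk), zero_mul]
    exact Finset.sum_eq_zero fun i _ => by simp [show (i : ℕ) ≠ k by omega]

end ZeroExtend

lemma Nat.eq_zero_of_forall_ge_of_succ_imp {R : Type*} [Zero R] {f : ℕ → R} {M : ℕ}
    (hM : ∀ m ≥ M, f m = 0) (hstep : ∀ m, f (m + 1) = 0 → f m = 0) (m : ℕ) : f m = 0 := by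
  rcases le_total m M with hm | hm
  · exact Nat.decreasingInduction (fun k _ => hstep k) (hM M le_rfl) hm
  · exact hM m hm

section Platoon

open Matrix

variable {α₁ α₂ α₃ : ℝ} {n : ℕ}

lemma platoonAC_apply_col_one {i j : Fin (2 * n + 2)} (hj : (j : ℕ) = 1) :
    platoonAC α₁ α₂ α₃ n i j =
      (if (i : ℕ) = 0 then 1 else 0) + (if (i : ℕ) = 2 then 1 else 0) +
        (if (i : ℕ) = 3 then (α₃ : ℂ) else 0) := by
  simp only [platoonAC, platoonA, Matrix.map_apply, Matrix.of_apply]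
  split_ifs <;> first | omega | (push_cast; ring)

lemma platoonAC_apply_col_even {i j : Fin (2 * n + 2)} {m : ℕ} (hj : (j : ℕ) = 2 * m + 2) :
    platoonAC α₁ α₂ α₃ n i j = if (i : ℕ) = 2 * m + 3 then (α₁ : ℂ) else 0 := by
  simp only [platoonAC, platoonA, Matrix.map_apply, Matrix.of_apply]
  split_ifs <;> first | omega | (push_cast; ring)

lemma platoonAC_apply_col_odd {i j : Fin (2 * n + 2)} {m : ℕ} (hj : (j : ℕ) = 2 * m + 3) :
    platoonAC α₁ α₂ α₃ n i j =
      (if (i : ℕ) = 2 * m + 2 then -1 else 0) + (if (i : ℕ) = 2 * m + 3 then -(α₂ : ℂ) else 0) +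
        (if (i : ℕ) = 2 * m + 4 then 1 else 0) + (if (i : ℕ) = 2 * m + 5 then (α₃ : ℂ) else 0) := by
  simp only [platoonAC, platoonA, Matrix.map_apply, Matrix.of_apply]
  split_ifs <;> first | omega | (push_cast; ring)

variable {ρ : Fin (2 * n + 2) → ℂ}

lemma zeroExtend_vecMul_platoonAC_one :
    zeroExtend (ρ ᵥ* platoonAC α₁ α₂ α₃ n) 1 =
      zeroExtend ρ 0 + zeroExtend ρ 2 + α₃ * zeroExtend ρ 3 := by
  have h1 : 1 < 2 * n + 2 := by omega
  rw [← Fin.val_mk h1, zeroExtend_val]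
  simp only [vecMul, dotProduct, platoonAC_apply_col_one (Fin.val_mk h1), mul_add,
    Finset.sum_add_distrib, sum_mul_ite_val_eq]
  ring

lemma zeroExtend_vecMul_platoonAC_even (m : ℕ) :
    zeroExtend (ρ ᵥ* platoonAC α₁ α₂ α₃ n) (2 * m + 2) = α₁ * zeroExtend ρ (2 * m + 3) := by
  by_cases hm : 2 * m + 2 < 2 * n + 2
  · rw [← Fin.val_mk hm, zeroExtend_val]
    simp only [vecMul, dotProduct, platoonAC_apply_col_even (Fin.val_mk hm),
      sum_mul_ite_val_eq]
    ring
  · rw [zeroExtend_of_le _ (by omega), zeroExtend_of_le _ (by omega), mul_zero]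

lemma zeroExtend_vecMul_platoonAC_odd (m : ℕ) :
    zeroExtend (ρ ᵥ* platoonAC α₁ α₂ α₃ n) (2 * m + 3) =
      -zeroExtend ρ (2 * m + 2) - α₂ * zeroExtend ρ (2 * m + 3) + zeroExtend ρ (2 * m + 4) +
        α₃ * zeroExtend ρ (2 * m + 5) := by
  by_cases hm : 2 * m + 3 < 2 * n + 2
  · rw [← Fin.val_mk hm, zeroExtend_val]
    simp only [vecMul, dotProduct, platoonAC_apply_col_odd (Fin.val_mk hm), mul_add,
      Finset.sum_add_distrib, sum_mul_ite_val_eq]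
    ring
  · have hvanish (k : ℕ) : zeroExtend ρ (2 * m + 2 + k) = 0 := zeroExtend_of_le ρ (by omega)
    rw [zeroExtend_of_le _ (by omega)]
    linear_combination hvanish 0 + α₂ * hvanish 1 - hvanish 2 - α₃ * hvanish 3

lemma dotProduct_platoonBC : ρ ⬝ᵥ platoonBC n = zeroExtend ρ 1 := by
  simp only [dotProduct, platoonBC, sum_mul_ite_val_eq, mul_one]

variable {l : ℂ} (heig : ρ ᵥ* platoonAC α₁ α₂ α₃ n = l • ρ)
include heig

lemma platoon_eigen_one : l * zeroExtend ρ 1 =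
    zeroExtend ρ 0 + zeroExtend ρ 2 + α₃ * zeroExtend ρ 3 := by
  rw [← zeroExtend_smul, ← heig, zeroExtend_vecMul_platoonAC_one]

lemma platoon_eigen_even (m : ℕ) :
    l * zeroExtend ρ (2 * m + 2) = α₁ * zeroExtend ρ (2 * m + 3) := by
  rw [← zeroExtend_smul, ← heig, zeroExtend_vecMul_platoonAC_even]

lemma platoon_eigen_odd (m : ℕ) :
    l * zeroExtend ρ (2 * m + 3) = -zeroExtend ρ (2 * m + 2) - α₂ * zeroExtend ρ (2 * m + 3) +
      zeroExtend ρ (2 * m + 4) + α₃ * zeroExtend ρ (2 * m + 5) := by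
  rw [← zeroExtend_smul, ← heig, zeroExtend_vecMul_platoonAC_odd]

lemma platoon_recursion (m : ℕ) :
    (l ^ 2 + α₂ * l + α₁) * zeroExtend ρ (2 * m + 3) =
      (α₃ * l + α₁) * zeroExtend ρ (2 * m + 5) := by
  have hnext := platoon_eigen_even heig (m + 1)
  rw [show 2 * (m + 1) + 2 = 2 * m + 4 by ring, show 2 * (m + 1) + 3 = 2 * m + 5 by ring] at hnext
  linear_combination l * platoon_eigen_odd heig m - platoon_eigen_even heig m + hnext

end Platoon

theorem platoon_left_eigenvector_trivial_general (α₁ α₂ α₃ : ℝ) (n : ℕ)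
    (l : ℂ) (ρ : Fin (2 * n + 2) → ℂ)
    (heig : Matrix.vecMul ρ (platoonAC α₁ α₂ α₃ n) = l • ρ)
    (hB : dotProduct ρ (platoonBC n) = 0)
    (h1 : l ^ 2 + (α₂ : ℂ) * l + (α₁ : ℂ) ≠ 0) :
    ρ = 0 := by
  have hvanish (m : ℕ) (hm : n ≤ m) (k : ℕ) : zeroExtend ρ (2 * m + 2 + k) = 0 :=
    zeroExtend_of_le ρ (by omega)
  have hodd : ∀ m, zeroExtend ρ (2 * m + 3) = 0 :=
    Nat.eq_zero_of_forall_ge_of_succ_imp (fun m hm => hvanish m hm 1) fun m hm => by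
      have hrec := platoon_recursion heig m
      rw [show 2 * m + 5 = 2 * (m + 1) + 3 by ring, hm, mul_zero] at hrec
      exact (mul_eq_zero.mp hrec).resolve_left h1
  have heven : ∀ m, zeroExtend ρ (2 * m + 2) = 0 :=
    Nat.eq_zero_of_forall_ge_of_succ_imp (fun m hm => hvanish m hm 0) fun m hm => by
      have hcol := platoon_eigen_odd heig m
      rw [show 2 * m + 4 = 2 * (m + 1) + 2 by ring, show 2 * m + 5 = 2 * (m + 1) + 3 by ring,
        hm, hodd, hodd] at hcol
      linear_combination hcol
  have h₁ : zeroExtend ρ 1 = 0 := dotProduct_platoonBC ▸ hB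
  have h₀ : zeroExtend ρ 0 = 0 := by
    linear_combination -platoon_eigen_one heig + l * h₁ - heven 0 - α₃ * hodd 0
  have hall : ∀ k, zeroExtend ρ k = 0
    | 0 => h₀
    | 1 => h₁
    | k + 2 => by
      obtain ⟨m, rfl | rfl⟩ := Nat.even_or_odd' k
      exacts [heven m, hodd m]
  funext i
  simpa using hall i

/-- If `ρ` is a left eigenvector of the `1+n` platoon matrix `Aₙ` for `λ` with
`ρᵀB = 0`, and `λ² + α₂λ + α₁ ≠ 0` and `α₃λ + α₁ ≠ 0`, then `ρ = 0`. -/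
theorem platoon_left_eigenvector_trivial (α₁ α₂ α₃ : ℝ) (n : ℕ) (hn : 1 ≤ n)
    (l : ℂ) (ρ : Fin (2 * n + 2) → ℂ)
    (heig : Matrix.vecMul ρ (platoonAC α₁ α₂ α₃ n) = l • ρ)
    (hB : dotProduct ρ (platoonBC n) = 0)
    (h1 : l ^ 2 + (α₂ : ℂ) * l + (α₁ : ℂ) ≠ 0)
    (h2 : (α₃ : ℂ) * l + (α₁ : ℂ) ≠ 0) :
    ρ = 0 :=
  platoon_left_eigenvector_trivial_general α₁ α₂ α₃ n l ρ heig hB h1
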